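/- Let f : ℝ → ℝ be a continuous integrable function and let μ be the signed measure with density f with respect to Lebesgue measure. Then Σ(μ) equals the number of zero-crossings of the function f, i.e., the supremum of n ∈ ℕ for which there exist x₁ < x₂ < ⋯ < x_{n+1} with f(x_i) f(x_{i+1}) < 0 for 1 ≤ i ≤ n (with sup ∅ = 0). -/

import Mathlib

/-!
The Jordan parts of `volume.withDensityᵥ f` have the continuous densities `f⁺` and `f⁻`. A product
of such measures charges an open set `U` iff `U` meets the product of the open sets `{f⁺ > 0}`,
`{f⁻ > 0}`: off that product it is null, and on an open box inside it every factor is positive.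
As `orderedSet` is open, `Σ` therefore counts increasing tuples at which `f` has strictly
alternating signs, i.e. consecutive products of values of `f` are negative. For `n ≥ 1` this already
forces `f (x 0) ≠ 0`; the index `n = 0` contributes `0` to both suprema.
-/

open MeasureTheory ENNReal

noncomputable def altMeasure (p q : MeasureTheory.Measure ℝ) (n : ℕ) :
    MeasureTheory.Measure (Fin n → ℝ) :=
  MeasureTheory.Measure.pi (fun i => if Even (i : ℕ) then p else q)

def orderedSet (n : ℕ) : Set (Fin n → ℝ) := {x | StrictMono x}

noncomputable def sigmaPair (p q : MeasureTheory.Measure ℝ) : ℕ∞ :=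
  ⨆ (n : ℕ) (_ : 0 < altMeasure p q (n+1) (orderedSet (n+1)) ∨
      0 < altMeasure q p (n+1) (orderedSet (n+1))), (n : ℕ∞)

/-- Number of zero-crossings of a finite signed measure. -/
noncomputable def sigmaCross (μ : MeasureTheory.SignedMeasure ℝ) : ℕ∞ :=
  sigmaPair μ.toJordanDecomposition.posPart μ.toJordanDecomposition.negPart

theorem ae_pos_withDensity_ofReal {X : Type*} [MeasurableSpace X] {μ : Measure X} {g : X → ℝ}
    (hg : Measurable g) : ∀ᵐ x ∂μ.withDensity (fun x => ENNReal.ofReal (g x)), 0 < g x :=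
  (ae_withDensity_iff hg.ennreal_ofReal).2 <|
    .of_forall fun _ hx => ENNReal.ofReal_pos.1 (pos_iff_ne_zero.2 hx)

theorem withDensity_ofReal_pos_iff_of_isOpen {X : Type*} [TopologicalSpace X] [MeasurableSpace X]
    [OpensMeasurableSpace X] {μ : Measure X} [μ.IsOpenPosMeasure] {g : X → ℝ} (hg : Continuous g)
    {U : Set X} (hU : IsOpen U) :
    0 < μ.withDensity (fun x => ENNReal.ofReal (g x)) U ↔ ∃ x ∈ U, 0 < g x := by
  have hsupp : Function.support (fun x => ENNReal.ofReal (g x)) = {x | 0 < g x} := by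
    ext; simp
  rw [withDensity_apply _ hU.measurableSet, setLIntegral_pos_iff hg.measurable.ennreal_ofReal,
    hsupp, ((isOpen_lt continuous_const hg).inter hU).measure_pos_iff μ]
  exact ⟨fun ⟨x, hgx, hx⟩ => ⟨x, hx, hgx⟩, fun ⟨x, hx, hgx⟩ => ⟨x, hgx, hx⟩⟩

theorem pi_withDensity_ofReal_pos_iff_of_isOpen {ι : Type*} [Fintype ι] {α : ι → Type*}
    [∀ i, TopologicalSpace (α i)] [∀ i, MeasurableSpace (α i)] [∀ i, OpensMeasurableSpace (α i)]
    {μ : ∀ i, Measure (α i)} [∀ i, SigmaFinite (μ i)] [∀ i, (μ i).IsOpenPosMeasure]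
    {g : ∀ i, α i → ℝ} (hg : ∀ i, Continuous (g i)) {U : Set (∀ i, α i)} (hU : IsOpen U) :
    0 < Measure.pi (fun i => (μ i).withDensity fun x => ENNReal.ofReal (g i x)) U ↔
      ∃ x ∈ U, ∀ i, 0 < g i (x i) := by
  set ν := fun i => (μ i).withDensity fun x => ENNReal.ofReal (g i x)
  constructor
  · intro hpos
    have hae : ∀ᵐ x ∂Measure.pi ν, ∀ i, 0 < g i (x i) := ae_all_iff.2 fun i =>
      (Measure.tendsto_eval_ae_ae (μ := ν)).eventually (ae_pos_withDensity_ofReal (hg i).measurable)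
    exact Measure.exists_mem_of_measure_ne_zero_of_ae hpos.ne' (ae_restrict_of_ae hae)
  · rintro ⟨x, hxU, hx⟩
    have hV : IsOpen (U ∩ {y | ∀ i, 0 < g i (y i)}) := by
      simp only [Set.ofPred_forall]
      exact hU.inter <| isOpen_iInter_of_finite fun i =>
        isOpen_lt continuous_const ((hg i).comp (continuous_apply i))
    obtain ⟨I, hI, hIV⟩ := isOpen_pi_iff'.1 hV x ⟨hxU, hx⟩
    refine lt_of_lt_of_le ?_ (measure_mono fun y hy => (hIV hy).1)
    rw [Measure.pi_pi]
    exact CanonicallyOrderedAdd.prod_pos.2 fun i _ =>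
      (withDensity_ofReal_pos_iff_of_isOpen (hg i) (hI i).1).2 ⟨x i, (hI i).2, hx i⟩

theorem isOpen_orderedSet (n : ℕ) : IsOpen (orderedSet n) := by
  cases n with
  | zero => exact isOpen_discrete _
  | succ n =>
    have : orderedSet (n + 1) = ⋂ i : Fin n, {x | x i.castSucc < x i.succ} := by
      ext x; simp [orderedSet, Fin.strictMono_iff_lt_succ]
    rw [this]
    exact isOpen_iInter_of_finite fun i => isOpen_lt (continuous_apply _) (continuous_apply _)

theorem sigmaCross_withDensityᵥ {f : ℝ → ℝ} (hf : Measurable f) (hfi : Integrable f) :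
    sigmaCross (volume.withDensityᵥ f) =
      sigmaPair (volume.withDensity fun x => ENNReal.ofReal (f x))
        (volume.withDensity fun x => ENNReal.ofReal (-f x)) := by
  rw [sigmaCross, SignedMeasure.toJordanDecomposition_eq_of_eq_add_withDensity hf hfi
    VectorMeasure.MutuallySingular.zero_left (zero_add _).symm]
  simp [SignedMeasure.toJordanDecomposition_zero]

theorem altMeasure_withDensity_ofReal (f : ℝ → ℝ) (n : ℕ) :
    altMeasure (volume.withDensity fun x => ENNReal.ofReal (f x))
        (volume.withDensity fun x => ENNReal.ofReal (-f x)) n =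
      Measure.pi fun i : Fin n =>
        volume.withDensity fun x => ENNReal.ofReal ((-1) ^ (i : ℕ) * f x) := by
  refine congrArg Measure.pi (funext fun i => ?_)
  rcases Nat.even_or_odd (i : ℕ) with h | h <;> simp [h, h.neg_one_pow, Nat.not_even_iff_odd.2]

theorem pos_mul_neg_one_pow_iff {n : ℕ} (t : Fin (n + 1) → ℝ) :
    (∀ i : Fin (n + 1), 0 < (-1) ^ (i : ℕ) * t i) ↔
      0 < t 0 ∧ ∀ i : Fin n, t i.castSucc * t i.succ < 0 := by
  have hsq (k : ℕ) : ((-1 : ℝ) ^ k) * (-1) ^ k = 1 := by rw [← mul_pow]; norm_num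
  constructor
  · intro h
    refine ⟨by simpa using h 0, fun i => ?_⟩
    have h₁ := h i.castSucc
    have h₂ := h i.succ
    simp only [Fin.val_castSucc, Fin.val_succ, pow_succ] at h₁ h₂
    nlinarith [mul_pos h₁ h₂, hsq i]
  · rintro ⟨h₀, hcross⟩ i
    induction i using Fin.induction with
    | zero => simpa using h₀
    | succ i ih =>
      have := hcross i
      simp only [Fin.val_castSucc, Fin.val_succ, pow_succ] at ih ⊢
      nlinarith [hsq i]

theorem pos_altMeasure_withDensity_ofReal_iff {f : ℝ → ℝ} (hf : Continuous f) (n : ℕ) :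
    0 < altMeasure (volume.withDensity fun x => ENNReal.ofReal (f x))
        (volume.withDensity fun x => ENNReal.ofReal (-f x)) (n + 1) (orderedSet (n + 1)) ↔
      ∃ x : Fin (n + 1) → ℝ, StrictMono x ∧ 0 < f (x 0) ∧
        ∀ i : Fin n, f (x i.castSucc) * f (x i.succ) < 0 := by
  rw [altMeasure_withDensity_ofReal, pi_withDensity_ofReal_pos_iff_of_isOpen
    (g := fun (i : Fin (n + 1)) x => (-1) ^ (i : ℕ) * f x) (fun _ => continuous_const.mul hf)
    (isOpen_orderedSet _)]
  exact exists_congr fun x => and_congr_right fun _ => pos_mul_neg_one_pow_iff (f ∘ x)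

theorem iSup_natCast_congr_of_pos {P Q : ℕ → Prop} (h : ∀ n, 0 < n → (P n ↔ Q n)) :
    ⨆ (n : ℕ) (_ : P n), (n : ℕ∞) = ⨆ (n : ℕ) (_ : Q n), (n : ℕ∞) := by
  suffices key : ∀ {P Q : ℕ → Prop}, (∀ n, 0 < n → P n → Q n) →
      ⨆ (n : ℕ) (_ : P n), (n : ℕ∞) ≤ ⨆ (n : ℕ) (_ : Q n), (n : ℕ∞) from
    le_antisymm (key fun n hn => (h n hn).1) (key fun n hn => (h n hn).2)
  intro P Q hPQ
  refine iSup₂_le fun n hn => ?_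
  rcases Nat.eq_zero_or_pos n with rfl | hpos
  · simp
  · exact le_iSup₂_of_le (f := fun n (_ : Q n) => (n : ℕ∞)) n (hPQ n hpos hn) le_rfl

/-- For the signed measure with density a continuous integrable `f` with respect to Lebesgue
measure, `Σ(μ)` equals the number of zero-crossings of the function `f`. -/
theorem stmt9 (f : ℝ → ℝ) (hf : Continuous f)
    (hint : MeasureTheory.Integrable f (MeasureTheory.volume : MeasureTheory.Measure ℝ)) :
    sigmaCross ((MeasureTheory.volume : MeasureTheory.Measure ℝ).withDensityᵥ f) =
      ⨆ (n : ℕ) (_ : ∃ x : Fin (n + 1) → ℝ, StrictMono x ∧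
        ∀ i : Fin n, f (x i.castSucc) * f (x i.succ) < 0), (n : ℕ∞) := by
  rw [sigmaCross_withDensityᵥ hf.measurable hint, sigmaPair]
  refine iSup_natCast_congr_of_pos fun n hn => ?_
  obtain ⟨m, rfl⟩ := Nat.exists_eq_add_one_of_ne_zero hn.ne'
  have hneg := pos_altMeasure_withDensity_ofReal_iff hf.neg (m + 1)
  simp only [Pi.neg_apply, neg_neg, neg_mul_neg] at hneg
  rw [pos_altMeasure_withDensity_ofReal_iff hf, hneg]
  constructor
  · rintro (⟨x, hx, -, hcross⟩ | ⟨x, hx, -, hcross⟩) <;> exact ⟨x, hx, hcross⟩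
  · rintro ⟨x, hx, hcross⟩
    have h₀ : f (x 0) ≠ 0 := fun h => by simpa [h] using hcross 0
    rcases h₀.lt_or_gt with h | h
    · exact Or.inr ⟨x, hx, neg_pos.2 h, hcross⟩
    · exact Or.inl ⟨x, hx, h, hcross⟩
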